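/- arXiv:2206.12640 — 5 statements merged into one kernel-verified Lean document; each statement's English description precedes it below -/
import Mathlib

section
/- Let μ₁ < μ₂, σ₁, σ₂ > 0 and α₁, α₂ > 0, and let I₁, I₂, γ* be as in the Gaussian pairwise rate computation: I_i(γ) = (γ − μ_i)²/(2σ_i²) and γ* = (α₁ μ₁/σ₁² + α₂ μ₂/σ₂²)/(α₁/σ₁² + α₂/σ₂²). Then the ratio I₁(γ*)/I₂(γ*) equals (σ₁² α₂²)/(α₁² σ₂²). -/
/-!
With weights `wᵢ = αᵢ / σᵢ²`, the point `γ*` is the weighted mean of `μ₁` and `μ₂`, so its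
distances to them are `γ* - μ₁ = w₂ (μ₂ - μ₁) / (w₁ + w₂)` and `γ* - μ₂ = w₁ (μ₁ - μ₂) / (w₁ + w₂)`.
The squared distances are therefore in the ratio `w₂² : w₁²`, and dividing them by the
denominators `2σᵢ²` of the two rate functions gives `σ₁² α₂² / (α₁² σ₂²)`.
-/

section WeightedMean

variable {K : Type*} [Field K] {w₁ w₂ : K}

theorem weightedMean_sub_left (hw : w₁ + w₂ ≠ 0) (x₁ x₂ : K) :
    (w₁ * x₁ + w₂ * x₂) / (w₁ + w₂) - x₁ = w₂ * (x₂ - x₁) / (w₁ + w₂) := by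
  field_simp
  ring

theorem weightedMean_sub_right (hw : w₁ + w₂ ≠ 0) (x₁ x₂ : K) :
    (w₁ * x₁ + w₂ * x₂) / (w₁ + w₂) - x₂ = w₁ * (x₁ - x₂) / (w₁ + w₂) := by
  field_simp
  ring

theorem sq_weightedMean_sub_div_sq_weightedMean_sub (hw : w₁ + w₂ ≠ 0) {x₁ x₂ : K}
    (hx : x₁ ≠ x₂) :
    ((w₁ * x₁ + w₂ * x₂) / (w₁ + w₂) - x₁) ^ 2 / ((w₁ * x₁ + w₂ * x₂) / (w₁ + w₂) - x₂) ^ 2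
      = w₂ ^ 2 / w₁ ^ 2 := by
  have hx' : (x₁ - x₂) ^ 2 ≠ 0 := pow_ne_zero 2 (sub_ne_zero.mpr hx)
  rw [weightedMean_sub_left hw, weightedMean_sub_right hw, div_pow, div_pow,
    div_div_div_cancel_right₀ (pow_ne_zero 2 hw), mul_pow, mul_pow, ← neg_sub x₁ x₂, neg_sq,
    mul_div_mul_right _ _ hx']

end WeightedMean

/-- The ratio `I₁(γ*)/I₂(γ*)` of the two Gaussian rate functions at the
balancing point `γ*` equals `σ₁²α₂²/(α₁²σ₂²)`. -/
theorem gaussian_rate_ratio (μ₁ μ₂ σ₁ σ₂ α₁ α₂ : ℝ)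
    (hμ : μ₁ < μ₂) (hσ₁ : 0 < σ₁) (hσ₂ : 0 < σ₂) (hα₁ : 0 < α₁) (hα₂ : 0 < α₂) :
    (((α₁ * μ₁ / σ₁ ^ 2 + α₂ * μ₂ / σ₂ ^ 2) / (α₁ / σ₁ ^ 2 + α₂ / σ₂ ^ 2) - μ₁) ^ 2
        / (2 * σ₁ ^ 2))
      / (((α₁ * μ₁ / σ₁ ^ 2 + α₂ * μ₂ / σ₂ ^ 2) / (α₁ / σ₁ ^ 2 + α₂ / σ₂ ^ 2) - μ₂) ^ 2
        / (2 * σ₂ ^ 2))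
      = σ₁ ^ 2 * α₂ ^ 2 / (α₁ ^ 2 * σ₂ ^ 2) := by
  have hw : α₁ / σ₁ ^ 2 + α₂ / σ₂ ^ 2 ≠ 0 := by positivity
  rw [mul_div_right_comm α₁, mul_div_right_comm α₂, div_div_div_comm,
    sq_weightedMean_sub_div_sq_weightedMean_sub hw hμ.ne]
  field_simp
end

section
/- Let λ₁, λ₂ > 0 and α₁, α₂ > 0, and define I_i(γ) = λ_i γ − 1 − log(λ_i γ) for γ > 0, i = 1, 2. The unique γ* > 0 solving α₁ I₁′(γ*) + α₂ I₂′(γ*) = 0 is γ* = (α₁ + α₂)/(α₁ λ₁ + α₂ λ₂), and G(α₁, α₂) := α₁ I₁(γ*) + α₂ I₂(γ*) = −α₁ log(λ₁(α₁+α₂)/(α₁λ₁+α₂λ₂)) − α₂ log(λ₂(α₁+α₂)/(α₁λ₁+α₂λ₂)). -/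
open Real

lemma deriv_rate (l : ℝ) (hl : 0 < l) {γ : ℝ} (hγ : 0 < γ) :
    deriv (fun γ => l * γ - 1 - Real.log (l * γ)) γ = l - 1/γ := by
  have h1 : HasDerivAt (fun γ : ℝ => l * γ) l γ := by
    simpa using (hasDerivAt_id γ).const_mul l
  have hne : l * γ ≠ 0 := by positivity
  have h2 : HasDerivAt (fun γ : ℝ => Real.log (l * γ)) (l / (l * γ)) γ := h1.log hne
  have h3 : HasDerivAt (fun γ : ℝ => l * γ - 1 - Real.log (l * γ)) (l - l / (l * γ)) γ :=
    (h1.sub_const 1).sub h2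
  have : l / (l * γ) = 1 / γ := by field_simp
  rw [h3.deriv, this]

/-- Closed-form pairwise large-deviations rate for two exponential designs:
with `I_i(γ) = λ_iγ − 1 − log(λ_iγ)`, the unique positive solution of
`α₁ I₁′(γ) + α₂ I₂′(γ) = 0` is `γ* = (α₁+α₂)/(α₁λ₁+α₂λ₂)`, and the value
`α₁I₁(γ*)+α₂I₂(γ*)` has the stated logarithmic form. -/
theorem exponential_pairwise_rate (l₁ l₂ α₁ α₂ : ℝ)
    (hl₁ : 0 < l₁) (hl₂ : 0 < l₂) (hα₁ : 0 < α₁) (hα₂ : 0 < α₂)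
    (I₁ I₂ : ℝ → ℝ)
    (hI₁ : I₁ = fun γ => l₁ * γ - 1 - Real.log (l₁ * γ))
    (hI₂ : I₂ = fun γ => l₂ * γ - 1 - Real.log (l₂ * γ)) :
    (∀ γ : ℝ, 0 < γ → (α₁ * deriv I₁ γ + α₂ * deriv I₂ γ = 0 ↔
      γ = (α₁ + α₂) / (α₁ * l₁ + α₂ * l₂))) ∧
    α₁ * I₁ ((α₁ + α₂) / (α₁ * l₁ + α₂ * l₂))
      + α₂ * I₂ ((α₁ + α₂) / (α₁ * l₁ + α₂ * l₂))
      = -α₁ * Real.log (l₁ * (α₁ + α₂) / (α₁ * l₁ + α₂ * l₂))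
        - α₂ * Real.log (l₂ * (α₁ + α₂) / (α₁ * l₁ + α₂ * l₂)) := by
  have hd : 0 < α₁ * l₁ + α₂ * l₂ := by positivity
  have hs : 0 < α₁ + α₂ := by positivity
  constructor
  · intro γ hγ
    rw [hI₁, hI₂, deriv_rate l₁ hl₁ hγ, deriv_rate l₂ hl₂ hγ]
    constructor
    · intro h
      field_simp at h ⊢
      nlinarith [h]
    · intro h
      subst h
      field_simp
      ring
  · set γ := (α₁ + α₂) / (α₁ * l₁ + α₂ * l₂) with hγdef
    have hγ : 0 < γ := by positivity
    rw [hI₁, hI₂]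
    simp only
    have key : (α₁ * l₁ + α₂ * l₂) * γ = α₁ + α₂ := by
      rw [hγdef]; field_simp
    have e1 : l₁ * (α₁ + α₂) / (α₁ * l₁ + α₂ * l₂) = l₁ * γ := by
      rw [hγdef]; ring
    have e2 : l₂ * (α₁ + α₂) / (α₁ * l₁ + α₂ * l₂) = l₂ * γ := by
      rw [hγdef]; ring
    rw [e1, e2]
    nlinarith [key]
end

section
/- Let q₁, q₂ ∈ (0,1), α₁, α₂ > 0, set h_i = q_i/(1 − q_i) and ρ = α₂/(α₁ + α₂), and let I_i(γ) = γ log(γ/q_i) + (1−γ) log((1−γ)/(1−q_i)). Then γ* = h₁^{1−ρ} h₂^{ρ} / (1 + h₁^{1−ρ} h₂^{ρ}) satisfies α₁ I₁′(γ*) + α₂ I₂′(γ*) = 0, and α₁ I₁(γ*) + α₂ I₂(γ*) = −(α₁ + α₂) log((1−q₁)^{1−ρ}(1−q₂)^{ρ} + q₁^{1−ρ} q₂^{ρ}). -/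
/-!
Write `A = q₁^{1-ρ} q₂^ρ` and `B = (1-q₁)^{1-ρ} (1-q₂)^ρ`. Since `I_i(γ)` is affine in
`(log q_i, log (1-q_i))`, the average `(1-ρ) I₁ + ρ I₂` is the relative entropy of
`Bernoulli(γ)` with respect to the unnormalized geometric mixture `(A, B)`. Its stationary point
is the normalized mixture `γ* = A/(A+B)`, where `γ/A = (1-γ)/B = 1/(A+B)`, so the value there
is `-log (A+B)`. Finally `α₁ = (α₁+α₂)(1-ρ)` and `α₂ = (α₁+α₂)ρ`.
-/

open Real

/-- Relative entropy of `Bernoulli(γ)` with respect to the weights `a` on `1` and `b` on `0`,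
which need not sum to one; the Bernoulli rate function is `klBern q (1 - q)`. -/
noncomputable def klBern (a b γ : ℝ) : ℝ :=
  γ * log (γ / a) + (1 - γ) * log ((1 - γ) / b)

section klBern

variable {a b : ℝ}

theorem klBern_eq_neg_binEntropy (ha : a ≠ 0) (hb : b ≠ 0) (γ : ℝ) :
    klBern a b γ = -binEntropy γ - (γ * log a + (1 - γ) * log b) := by
  have mul_log_div : ∀ x c : ℝ, c ≠ 0 → x * log (x / c) = -(x * log x⁻¹) - x * log c := by
    intro x c hc
    rcases eq_or_ne x 0 with rfl | hx
    · simp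
    · rw [log_div hx hc, log_inv]
      ring
  simp only [klBern, binEntropy, mul_log_div _ _ ha, mul_log_div _ _ hb]
  ring

theorem hasDerivAt_klBern (ha : a ≠ 0) (hb : b ≠ 0) {γ : ℝ} (hγ₀ : γ ≠ 0) (hγ₁ : γ ≠ 1) :
    HasDerivAt (klBern a b) (log (γ / a) - log ((1 - γ) / b)) γ := by
  have h1γ : 1 - γ ≠ 0 := sub_ne_zero.mpr hγ₁.symm
  have hlin : HasDerivAt (fun x => x * log a + (1 - x) * log b) (log a - log b) γ := by
    have h := ((hasDerivAt_id' γ).mul_const (log a)).add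
      (((hasDerivAt_id' γ).const_sub 1).mul_const (log b))
    exact h.congr_deriv (by ring)
  have h := (hasDerivAt_binEntropy hγ₀ hγ₁).neg.sub hlin
  rw [funext (klBern_eq_neg_binEntropy ha hb)]
  refine h.congr_deriv ?_
  rw [log_div hγ₀ ha, log_div h1γ hb]
  ring

theorem deriv_klBern (ha : a ≠ 0) (hb : b ≠ 0) {γ : ℝ} (hγ₀ : γ ≠ 0) (hγ₁ : γ ≠ 1) :
    deriv (klBern a b) γ = log (γ / a) - log ((1 - γ) / b) :=
  (hasDerivAt_klBern ha hb hγ₀ hγ₁).deriv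

theorem one_sub_div_add_self (hab : a + b ≠ 0) : 1 - a / (a + b) = b / (a + b) := by
  rw [one_sub_div hab, add_sub_cancel_left]

theorem klBern_div_add (ha : a ≠ 0) (hb : b ≠ 0) (hab : a + b ≠ 0) :
    klBern a b (a / (a + b)) = -log (a + b) := by
  rw [klBern, one_sub_div_add_self hab, div_div_cancel_left' ha, div_div_cancel_left' hb,
    ← add_mul, ← one_sub_div_add_self hab, add_sub_cancel, one_mul, log_inv]

theorem deriv_klBern_div_add (ha : a ≠ 0) (hb : b ≠ 0) (hab : a + b ≠ 0) :
    deriv (klBern a b) (a / (a + b)) = 0 := by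
  have hγ₀ : a / (a + b) ≠ 0 := div_ne_zero ha hab
  have hγ₁ : a / (a + b) ≠ 1 := by
    rw [ne_eq, div_eq_one_iff_eq hab, left_eq_add]
    exact hb
  rw [deriv_klBern ha hb hγ₀ hγ₁, one_sub_div_add_self hab, div_div_cancel_left' ha,
    div_div_cancel_left' hb, sub_self]

variable {a₁ b₁ a₂ b₂ : ℝ}

theorem klBern_geomMix (ha₁ : 0 < a₁) (hb₁ : 0 < b₁) (ha₂ : 0 < a₂) (hb₂ : 0 < b₂) (ρ γ : ℝ) :
    (1 - ρ) * klBern a₁ b₁ γ + ρ * klBern a₂ b₂ γ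
      = klBern (a₁ ^ (1 - ρ) * a₂ ^ ρ) (b₁ ^ (1 - ρ) * b₂ ^ ρ) γ := by
  rw [klBern_eq_neg_binEntropy ha₁.ne' hb₁.ne', klBern_eq_neg_binEntropy ha₂.ne' hb₂.ne',
    klBern_eq_neg_binEntropy (by positivity) (by positivity),
    log_mul (by positivity) (by positivity), log_mul (by positivity) (by positivity),
    log_rpow ha₁, log_rpow ha₂, log_rpow hb₁, log_rpow hb₂]
  ring

theorem deriv_klBern_geomMix (ha₁ : 0 < a₁) (hb₁ : 0 < b₁) (ha₂ : 0 < a₂) (hb₂ : 0 < b₂)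
    (ρ : ℝ) {γ : ℝ} (hγ₀ : γ ≠ 0) (hγ₁ : γ ≠ 1) :
    (1 - ρ) * deriv (klBern a₁ b₁) γ + ρ * deriv (klBern a₂ b₂) γ
      = deriv (klBern (a₁ ^ (1 - ρ) * a₂ ^ ρ) (b₁ ^ (1 - ρ) * b₂ ^ ρ)) γ := by
  have h := ((hasDerivAt_klBern ha₁.ne' hb₁.ne' hγ₀ hγ₁).const_mul (1 - ρ)).add
    ((hasDerivAt_klBern ha₂.ne' hb₂.ne' hγ₀ hγ₁).const_mul ρ)
  have hmix : ((fun y => (1 - ρ) * klBern a₁ b₁ y) + fun y => ρ * klBern a₂ b₂ y)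
      = klBern (a₁ ^ (1 - ρ) * a₂ ^ ρ) (b₁ ^ (1 - ρ) * b₂ ^ ρ) :=
    funext (klBern_geomMix ha₁ hb₁ ha₂ hb₂ ρ)
  rw [hmix] at h
  rw [deriv_klBern ha₁.ne' hb₁.ne' hγ₀ hγ₁, deriv_klBern ha₂.ne' hb₂.ne' hγ₀ hγ₁, h.deriv]

end klBern

/-- Closed-form pairwise large-deviations rate for two Bernoulli designs:
with `h_i = q_i/(1−q_i)`, `ρ = α₂/(α₁+α₂)` and
`γ* = h₁^{1−ρ}h₂^{ρ}/(1+h₁^{1−ρ}h₂^{ρ})`, the point `γ*` solves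
`α₁ I₁′(γ*) + α₂ I₂′(γ*) = 0`, and
`α₁I₁(γ*)+α₂I₂(γ*) = −(α₁+α₂) log((1−q₁)^{1−ρ}(1−q₂)^{ρ} + q₁^{1−ρ}q₂^{ρ})`. -/
theorem bernoulli_pairwise_rate (q₁ q₂ α₁ α₂ : ℝ)
    (hq₁0 : 0 < q₁) (hq₁1 : q₁ < 1) (hq₂0 : 0 < q₂) (hq₂1 : q₂ < 1)
    (hα₁ : 0 < α₁) (hα₂ : 0 < α₂)
    (I₁ I₂ : ℝ → ℝ)
    (hI₁ : I₁ = fun γ => γ * Real.log (γ / q₁) + (1 - γ) * Real.log ((1 - γ) / (1 - q₁)))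
    (hI₂ : I₂ = fun γ => γ * Real.log (γ / q₂) + (1 - γ) * Real.log ((1 - γ) / (1 - q₂)))
    (h₁ h₂ ρ γs : ℝ)
    (hh₁ : h₁ = q₁ / (1 - q₁)) (hh₂ : h₂ = q₂ / (1 - q₂))
    (hρ : ρ = α₂ / (α₁ + α₂))
    (hγs : γs = h₁ ^ (1 - ρ) * h₂ ^ ρ / (1 + h₁ ^ (1 - ρ) * h₂ ^ ρ)) :
    α₁ * deriv I₁ γs + α₂ * deriv I₂ γs = 0 ∧
    α₁ * I₁ γs + α₂ * I₂ γs
      = -(α₁ + α₂) * Real.log ((1 - q₁) ^ (1 - ρ) * (1 - q₂) ^ ρ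
          + q₁ ^ (1 - ρ) * q₂ ^ ρ) := by
  obtain rfl : I₁ = klBern q₁ (1 - q₁) := hI₁
  obtain rfl : I₂ = klBern q₂ (1 - q₂) := hI₂
  have hp₁ : 0 < 1 - q₁ := sub_pos.mpr hq₁1
  have hp₂ : 0 < 1 - q₂ := sub_pos.mpr hq₂1
  set A := q₁ ^ (1 - ρ) * q₂ ^ ρ with hA_def
  set B := (1 - q₁) ^ (1 - ρ) * (1 - q₂) ^ ρ with hB_def
  have hA : 0 < A := by positivity
  have hB : 0 < B := by positivity
  have hAB : A + B ≠ 0 := by positivity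
  have hγs_eq : γs = A / (A + B) := by
    rw [hγs, hh₁, hh₂, div_rpow hq₁0.le hp₁.le, div_rpow hq₂0.le hp₂.le, hA_def, hB_def]
    field_simp
    ring
  have hγ₀ : γs ≠ 0 := by rw [hγs_eq]; positivity
  have hγ₁ : γs ≠ 1 := by
    rw [hγs_eq]
    exact ((div_lt_one (by positivity)).mpr (by linarith)).ne
  have hα₁_eq : α₁ = (α₁ + α₂) * (1 - ρ) := by rw [hρ]; field_simp; ring
  have hα₂_eq : α₂ = (α₁ + α₂) * ρ := by rw [hρ]; field_simp
  have hstationary : (1 - ρ) * deriv (klBern q₁ (1 - q₁)) γs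
      + ρ * deriv (klBern q₂ (1 - q₂)) γs = 0 := by
    rw [deriv_klBern_geomMix hq₁0 hp₁ hq₂0 hp₂ ρ hγ₀ hγ₁, hγs_eq, deriv_klBern_div_add hA.ne' hB.ne' hAB]
  have hvalue : (1 - ρ) * klBern q₁ (1 - q₁) γs + ρ * klBern q₂ (1 - q₂) γs = -log (B + A) := by
    rw [klBern_geomMix hq₁0 hp₁ hq₂0 hp₂, hγs_eq, klBern_div_add hA.ne' hB.ne' hAB,
      add_comm]
  constructor
  · linear_combination (α₁ + α₂) * hstationary + deriv (klBern q₁ (1 - q₁)) γs * hα₁_eq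
      + deriv (klBern q₂ (1 - q₂)) γs * hα₂_eq
  · linear_combination (α₁ + α₂) * hvalue + klBern q₁ (1 - q₁) γs * hα₁_eq
      + klBern q₂ (1 - q₂) γs * hα₂_eq
end

section
/- Let W₁, W₂, ... be i.i.d. random variables with distribution N(μ, σ²), and let μ̂_N = (1/N)∑_{q=1}^N W_q and σ̂²_N = (1/(N−1))∑_{q=1}^N (W_q − μ̂_N)² be the sample mean and sample variance. Then N^{3/4} |σ̂²_{N+1} − σ̂²_N| → 0 almost surely as N → ∞. -/
/-!
Adding the observation `W N` changes the sample variance by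
`(W N - μ̂_N)² / (N + 1) - σ̂²_N / N`. The strong law of large numbers, applied to `W`, `W²` and
`W⁸` (Gaussians have moments of all orders), makes `μ̂_N` and `σ̂²_N` converge and gives
`W N ⁸ / N → 0`, that is `W N = o(N^{1/8})`. Hence both terms are `o(N^{-3/4})`.
-/

open MeasureTheory ProbabilityTheory Filter Real
open scoped NNReal

/-- Sample mean of the first `N` observations `W 0, ..., W (N-1)`. -/
noncomputable def sampleMean (W : ℕ → ℝ) (N : ℕ) : ℝ :=
  (1 / (N : ℝ)) * ∑ q ∈ Finset.range N, W q

/-- Unbiased sample variance of the first `N` observations. -/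
noncomputable def sampleVar (W : ℕ → ℝ) (N : ℕ) : ℝ :=
  (1 / ((N : ℝ) - 1)) * ∑ q ∈ Finset.range N, (W q - sampleMean W N) ^ 2

open Topology

theorem tendsto_zero_of_tendsto_pow_zero {α : Type*} {l : Filter α} {f : α → ℝ} {k : ℕ}
    (hk : k ≠ 0) (h : Tendsto (fun x => f x ^ k) l (𝓝 0)) : Tendsto f l (𝓝 0) := by
  rw [tendsto_zero_iff_abs_tendsto_zero]
  have := h.abs.rpow_const (p := (k : ℝ)⁻¹) (Or.inr (by positivity))
  rw [abs_zero, Real.zero_rpow (by positivity)] at this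
  refine this.congr fun x => ?_
  rw [abs_pow, Real.pow_rpow_inv_natCast (abs_nonneg _) hk, Function.comp_apply]

theorem integrable_pow_gaussianReal (μ : ℝ) (v : ℝ≥0) (k : ℕ) :
    Integrable (fun x : ℝ => x ^ k) (gaussianReal μ v) :=
  (memLp_id_gaussianReal k).integrable_norm_pow' |>.mono' (by fun_prop) (by simp)

theorem sampleMean_eq_sum_div (x : ℕ → ℝ) (n : ℕ) :
    sampleMean x n = (∑ q ∈ Finset.range n, x q) / n := by
  rw [sampleMean, one_div_mul_eq_div]

theorem sampleVar_eq_mul_sub_sampleMean_sq (x : ℕ → ℝ) (n : ℕ) :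
    sampleVar x n = n / (n - 1) * (sampleMean (x · ^ 2) n - sampleMean x n ^ 2) := by
  rcases Nat.eq_zero_or_pos n with rfl | hpos
  · simp [sampleVar, sampleMean]
  have hn : (n : ℝ) ≠ 0 := by positivity
  simp only [sampleVar, sampleMean_eq_sum_div]
  rw [Finset.sum_congr rfl fun q _ => sub_sq (x q) _, Finset.sum_add_distrib,
    Finset.sum_sub_distrib, ← Finset.sum_mul, ← Finset.mul_sum, Finset.sum_const,
    Finset.card_range, nsmul_eq_mul]
  field_simp
  ring

theorem sampleVar_succ_sub (x : ℕ → ℝ) {n : ℕ} (hn : 1 < n) :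
    sampleVar x (n + 1) - sampleVar x n =
      (x n - sampleMean x n) ^ 2 / (n + 1) - sampleVar x n / n := by
  have hn1 : (n : ℝ) - 1 ≠ 0 := by
    rw [sub_ne_zero]; exact_mod_cast hn.ne'
  have hn0 : (n : ℝ) ≠ 0 := by positivity
  simp only [sampleVar_eq_mul_sub_sampleMean_sq, sampleMean_eq_sum_div, Finset.sum_range_succ]
  push_cast
  rw [add_sub_cancel_right]
  field_simp
  ring

theorem tendsto_div_natCast_of_tendsto_sampleMean {x : ℕ → ℝ} {c : ℝ}
    (h : Tendsto (sampleMean x) atTop (𝓝 c)) : Tendsto (fun n => x n / n) atTop (𝓝 0) := by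
  have hratio : Tendsto (fun n : ℕ => (n + 1 : ℝ) / n) atTop (𝓝 1) := by
    simpa using (tendsto_natCast_div_add_atTop (1 : ℝ)).inv₀ one_ne_zero
  have hdiff := (hratio.mul (h.comp (tendsto_add_atTop_nat 1))).sub h
  rw [one_mul, sub_self] at hdiff
  refine hdiff.congr' ?_
  filter_upwards [eventually_ne_atTop 0] with n hn
  simp only [Function.comp_apply, sampleMean_eq_sum_div, Finset.sum_range_succ]
  push_cast
  field_simp
  ring

theorem tendsto_sampleVar {x : ℕ → ℝ} {a b : ℝ} (h1 : Tendsto (sampleMean x) atTop (𝓝 a))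
    (h2 : Tendsto (sampleMean (x · ^ 2)) atTop (𝓝 b)) :
    Tendsto (sampleVar x) atTop (𝓝 (b - a ^ 2)) := by
  have hratio : Tendsto (fun n : ℕ => (n : ℝ) / (n - 1)) atTop (𝓝 1) := by
    simpa [sub_eq_add_neg] using tendsto_natCast_div_add_atTop (-1 : ℝ)
  have h := hratio.mul (h2.sub (h1.pow 2))
  rw [one_mul] at h
  exact h.congr fun n => (sampleVar_eq_mul_sub_sampleMean_sq x n).symm

theorem tendsto_rpow_mul_abs_sampleVar_succ_sub {x : ℕ → ℝ} {a b c : ℝ}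
    (h1 : Tendsto (sampleMean x) atTop (𝓝 a))
    (h2 : Tendsto (sampleMean (x · ^ 2)) atTop (𝓝 b))
    (h8 : Tendsto (sampleMean (x · ^ 8)) atTop (𝓝 c)) :
    Tendsto (fun N : ℕ => (N : ℝ) ^ ((3 : ℝ) / 4) * |sampleVar x (N + 1) - sampleVar x N|)
      atTop (𝓝 0) := by
  set t : ℕ → ℝ := fun N => (N : ℝ) ^ ((1 : ℝ) / 8) with ht_def
  have ht : Tendsto t atTop atTop :=
    (tendsto_rpow_atTop (by norm_num)).comp tendsto_natCast_atTop_atTop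
  have ht_pow (N : ℕ) (k : ℕ) : t N ^ k = (N : ℝ) ^ ((k : ℝ) / 8) := by
    rw [ht_def, ← Real.rpow_natCast, ← Real.rpow_mul (Nat.cast_nonneg N)]
    ring_nf
  have hx : Tendsto (fun N => x N / t N) atTop (𝓝 0) := by
    refine tendsto_zero_of_tendsto_pow_zero (k := 8) (by norm_num) ?_
    refine (tendsto_div_natCast_of_tendsto_sampleMean h8).congr fun N => ?_
    rw [div_pow, ht_pow]
    norm_num
  have hmean : Tendsto (fun N => sampleMean x N / t N) atTop (𝓝 0) := h1.div_atTop ht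
  have hvar : Tendsto (fun N => sampleVar x N / t N ^ 2) atTop (𝓝 0) :=
    (tendsto_sampleVar h1 h2).div_atTop ((tendsto_pow_atTop two_ne_zero).comp ht)
  -- With `t = N^{1/8}`: `N^{3/4} (σ̂²_{N+1} - σ̂²_N) = N/(N+1) ((x N - μ̂_N)/t)² - σ̂²_N/t²`.
  have hlim := ((tendsto_natCast_div_add_atTop (1 : ℝ)).mul ((hx.sub hmean).pow 2)).sub hvar
  rw [sub_self, zero_pow two_ne_zero, mul_zero, sub_zero] at hlim
  refine (tendsto_zero_iff_abs_tendsto_zero _).1 hlim |>.congr' ?_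
  filter_upwards [eventually_gt_atTop 1] with N hN1
  have htN : 0 < t N := by positivity
  have h34 : (N : ℝ) ^ ((3 : ℝ) / 4) = t N ^ 6 := by rw [ht_pow]; norm_num
  have hN : (N : ℝ) = t N ^ 8 := by rw [ht_pow]; norm_num
  rw [Function.comp_apply, h34, ← abs_of_nonneg (pow_nonneg htN.le 6), ← abs_mul,
    sampleVar_succ_sub x hN1, hN]
  congr 1
  field_simp

theorem ae_tendsto_sampleMean_comp {Ω : Type*} [MeasurableSpace Ω] {P : Measure Ω}
    {X : ℕ → Ω → ℝ} (hindep : Pairwise fun i j => IndepFun (X i) (X j) P)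
    (hident : ∀ i, IdentDistrib (X i) (X 0) P P) {f : ℝ → ℝ} (hf : Measurable f)
    (hint : Integrable (f ∘ X 0) P) :
    ∀ᵐ ω ∂P, Tendsto (sampleMean fun q => f (X q ω)) atTop (𝓝 (P[f ∘ X 0])) := by
  have h := strong_law_ae_real (fun i => f ∘ X i) hint
    (fun i j hij => (hindep hij).comp hf hf) fun i => (hident i).comp hf
  filter_upwards [h] with ω hω
  exact hω.congr fun n => (sampleMean_eq_sum_div _ n).symm

theorem sample_variance_one_step_fluctuation_general
    {Ω : Type*} [MeasureSpace Ω] [IsProbabilityMeasure (ℙ : Measure Ω)]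
    (μ : ℝ) (v : ℝ≥0) (W : ℕ → Ω → ℝ)
    (hindep : iIndepFun W ℙ)
    (hdist : ∀ i, Measure.map (W i) ℙ = gaussianReal μ v) :
    ∀ᵐ ω ∂ℙ, Tendsto (fun N : ℕ =>
        (N : ℝ) ^ ((3 : ℝ) / 4) *
          |sampleVar (fun q => W q ω) (N + 1) - sampleVar (fun q => W q ω) N|)
      atTop (nhds 0) := by
  have hmeas (i : ℕ) : AEMeasurable (W i) ℙ :=
    .of_map_ne_zero (by rw [hdist i]; exact IsProbabilityMeasure.ne_zero _)
  have hident (i : ℕ) : IdentDistrib (W i) (W 0) ℙ ℙ :=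
    ⟨hmeas i, hmeas 0, by rw [hdist i, hdist 0]⟩
  have hslln (k : ℕ) := ae_tendsto_sampleMean_comp (fun i j hij => hindep.indepFun hij) hident
    (measurable_id.pow_const k) <| (integrable_map_measure (by fun_prop) (hmeas 0)).1 <| by
      rw [hdist 0]; exact integrable_pow_gaussianReal μ v k
  filter_upwards [hslln 1, hslln 2, hslln 8] with ω h1 h2 h8
  simp only [pow_one] at h1
  exact tendsto_rpow_mul_abs_sampleVar_succ_sub h1 h2 h8

/-- For i.i.d. Gaussian observations, `N^{3/4} |σ̂²_{N+1} − σ̂²_N| → 0`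
almost surely. -/
theorem sample_variance_one_step_fluctuation
    {Ω : Type*} [MeasureSpace Ω] [IsProbabilityMeasure (ℙ : Measure Ω)]
    (μ : ℝ) (v : ℝ≥0) (W : ℕ → Ω → ℝ)
    (hmeas : ∀ i, Measurable (W i))
    (hindep : iIndepFun W ℙ)
    (hdist : ∀ i, Measure.map (W i) ℙ = gaussianReal μ v) :
    ∀ᵐ ω ∂ℙ, Tendsto (fun N : ℕ =>
        (N : ℝ) ^ ((3 : ℝ) / 4) *
          |sampleVar (fun q => W q ω) (N + 1) - sampleVar (fun q => W q ω) N|)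
      atTop (nhds 0) :=
  sample_variance_one_step_fluctuation_general μ v W hindep hdist
end

section
/- Let μ* < μ_i for i = 2,...,k, let σ*, σ_i > 0, and let α*, α_i > 0 (i = 2,...,k) satisfy the optimality conditions: (a) α*²/σ*² = ∑_{i=2}^k α_i²/σ_i², and (b) (μ_i − μ*)²/(σ*²/α* + σ_i²/α_i) = (μ_{i'} − μ*)²/(σ*²/α* + σ_{i'}²/α_{i'}) for all i, i' ∈ {2,...,k}. If also β*, β_i > 0 satisfy (a) and (b) and (α*, α₂, ..., α_k) and (β*, β₂, ..., β_k) are both normalized to sum to 1, then they are equal, i.e., the solution of the system (a)–(b) with the normalization constraint is unique. -/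
/-!
Conditions (a) and (b) are homogeneous: scaling an allocation by `t` scales both sides of (a)
by `t²` and every rate by `t`. So the `α`-solution rescaled to have star component `β*` is again
a solution, and the normalization forces the scale to be `1` once we know that a solution is
determined by its star component. For that, if two solutions with the same star component
differed, one would be larger at some design, so its common rate would be larger, so (each rate
being strictly increasing) it would be larger at every design, contradicting (a).
-/

open Finset

/-- The rate `G_i(α*, α_i)` with `δ = μ_i - μ*`, `σ₀ = σ*`, `σ = σ_i`, `a₀ = α*`, `a = α_i`. -/
noncomputable def pairwiseRate (δ σ₀ σ a₀ a : ℝ) : ℝ :=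
  δ ^ 2 / (σ₀ ^ 2 / a₀ + σ ^ 2 / a)

lemma pairwiseRate_mul_mul (δ σ₀ σ a₀ a t : ℝ) :
    pairwiseRate δ σ₀ σ (t * a₀) (t * a) = t * pairwiseRate δ σ₀ σ a₀ a := by
  have hsum : σ₀ ^ 2 / (t * a₀) + σ ^ 2 / (t * a) = t⁻¹ * (σ₀ ^ 2 / a₀ + σ ^ 2 / a) := by
    simp only [div_eq_mul_inv, mul_inv]
    ring
  rw [pairwiseRate, pairwiseRate, hsum, div_eq_mul_inv, div_eq_mul_inv, mul_inv, inv_inv]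
  ring

lemma strictMonoOn_pairwiseRate {δ σ₀ σ a₀ : ℝ} (hδ : δ ≠ 0) (hσ : σ ≠ 0) (ha₀ : 0 ≤ a₀) :
    StrictMonoOn (pairwiseRate δ σ₀ σ a₀) (Set.Ioi 0) := by
  intro a ha b _ hab
  have hb_lt_a : σ ^ 2 / b < σ ^ 2 / a := div_lt_div_of_pos_left (by positivity) ha hab
  have hb_pos : 0 < σ₀ ^ 2 / a₀ + σ ^ 2 / b := by
    have : 0 < b := lt_trans (Set.mem_Ioi.mp ha) hab
    positivity
  exact div_lt_div_of_pos_left (by positivity) hb_pos (by linarith)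

lemma sum_lt_sum_of_equalized {I α β γ : Type*} [Fintype I] [LinearOrder α] [Preorder β]
    [AddCommMonoid γ] [PartialOrder γ] [IsOrderedCancelAddMonoid γ] {s : Set α}
    {r : I → α → β} {g : I → α → γ} (hr : ∀ i, StrictMonoOn (r i) s)
    (hg : ∀ i, StrictMonoOn (g i) s) {x y : I → α} (hx : ∀ i, x i ∈ s) (hy : ∀ i, y i ∈ s)
    (hrx : ∀ i j, r i (x i) = r j (x j)) (hry : ∀ i j, r i (y i) = r j (y j))
    {i₀ : I} (hi₀ : x i₀ < y i₀) :
    ∑ i, g i (x i) < ∑ i, g i (y i) := by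
  have hlt : ∀ i, x i < y i := fun i =>
    (hr i).lt_iff_lt (hx i) (hy i) |>.mp <| by
      rw [hrx i i₀, hry i i₀]
      exact hr i₀ (hx i₀) (hy i₀) hi₀
  exact sum_lt_sum_of_nonempty ⟨i₀, mem_univ _⟩ fun i _ => hg i (hx i) (hy i) (hlt i)

lemma eq_of_equalized_of_sum_eq {I α β γ : Type*} [Fintype I] [LinearOrder α] [Preorder β]
    [AddCommMonoid γ] [PartialOrder γ] [IsOrderedCancelAddMonoid γ] {s : Set α}
    {r : I → α → β} {g : I → α → γ} (hr : ∀ i, StrictMonoOn (r i) s)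
    (hg : ∀ i, StrictMonoOn (g i) s) {x y : I → α} (hx : ∀ i, x i ∈ s) (hy : ∀ i, y i ∈ s)
    (hrx : ∀ i j, r i (x i) = r j (x j)) (hry : ∀ i j, r i (y i) = r j (y j))
    (hsum : ∑ i, g i (x i) = ∑ i, g i (y i)) :
    x = y := by
  by_contra hne
  obtain ⟨i₀, hi₀⟩ := Function.ne_iff.mp hne
  rcases hi₀.lt_or_gt with hlt | hgt
  · exact (sum_lt_sum_of_equalized hr hg hx hy hrx hry hlt).ne hsum
  · exact (sum_lt_sum_of_equalized hr hg hy hx hry hrx hgt).ne' hsum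

section OptimalityConditions

variable {I : Type*} [Fintype I] (μstar : ℝ) (μ : I → ℝ) (σstar : ℝ) (σ : I → ℝ)

/-- Conditions (a) and (b) on an allocation `(astar, a)`. -/
def OCBAConditions (astar : ℝ) (a : I → ℝ) : Prop :=
  astar ^ 2 / σstar ^ 2 = ∑ i, a i ^ 2 / σ i ^ 2 ∧
    ∀ i i', pairwiseRate (μ i - μstar) σstar (σ i) astar (a i)
      = pairwiseRate (μ i' - μstar) σstar (σ i') astar (a i')

variable {μstar μ σstar σ}

lemma OCBAConditions.mul {astar : ℝ} {a : I → ℝ} (h : OCBAConditions μstar μ σstar σ astar a)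
    (t : ℝ) : OCBAConditions μstar μ σstar σ (t * astar) (fun i => t * a i) := by
  refine ⟨?_, fun i i' => ?_⟩
  · simp only [mul_pow, mul_div_assoc, ← mul_sum, h.1]
  · simp only [pairwiseRate_mul_mul, h.2 i i']

lemma OCBAConditions.eq_of_star_eq (hμ : ∀ i, μ i ≠ μstar) (hσ : ∀ i, σ i ≠ 0)
    {astar : ℝ} {a b : I → ℝ} (hastar : 0 ≤ astar) (ha : ∀ i, 0 < a i) (hb : ∀ i, 0 < b i)
    (ha_opt : OCBAConditions μstar μ σstar σ astar a)
    (hb_opt : OCBAConditions μstar μ σstar σ astar b) :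
    a = b :=
  eq_of_equalized_of_sum_eq (g := fun i u => u ^ 2 / σ i ^ 2)
    (fun i => strictMonoOn_pairwiseRate (sub_ne_zero.mpr (hμ i)) (hσ i) hastar)
    (fun i _ hu _ _ huv => div_lt_div_of_pos_right
      (pow_lt_pow_left₀ huv (le_of_lt hu) two_ne_zero) (sq_pos_of_ne_zero (hσ i)))
    ha hb ha_opt.2 hb_opt.2 (ha_opt.1.symm.trans hb_opt.1)

end OptimalityConditions

theorem ocba_allocation_unique_general {I : Type*} [Fintype I]
    (μstar : ℝ) (μ : I → ℝ) (σstar : ℝ) (σ : I → ℝ)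
    (hμ : ∀ i, μstar < μ i) (hσ : ∀ i, 0 < σ i)
    (αstar : ℝ) (α : I → ℝ) (βstar : ℝ) (β : I → ℝ)
    (hαstar : 0 < αstar) (hα : ∀ i, 0 < α i)
    (hβstar : 0 < βstar) (hβ : ∀ i, 0 < β i)
    (haA : αstar ^ 2 / σstar ^ 2 = ∑ i, (α i) ^ 2 / (σ i) ^ 2)
    (haB : ∀ i i', (μ i - μstar) ^ 2 / (σstar ^ 2 / αstar + (σ i) ^ 2 / α i)
      = (μ i' - μstar) ^ 2 / (σstar ^ 2 / αstar + (σ i') ^ 2 / α i'))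
    (hbA : βstar ^ 2 / σstar ^ 2 = ∑ i, (β i) ^ 2 / (σ i) ^ 2)
    (hbB : ∀ i i', (μ i - μstar) ^ 2 / (σstar ^ 2 / βstar + (σ i) ^ 2 / β i)
      = (μ i' - μstar) ^ 2 / (σstar ^ 2 / βstar + (σ i') ^ 2 / β i'))
    (hnormα : αstar + ∑ i, α i = 1)
    (hnormβ : βstar + ∑ i, β i = 1) :
    βstar = αstar ∧ β = α := by
  set t := βstar / αstar
  have hβstar_eq : t * αstar = βstar := div_mul_cancel₀ βstar hαstar.ne'
  have hβ_eq : β = fun i => t * α i := by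
    have hscaled := OCBAConditions.mul (μstar := μstar) (μ := μ) ⟨haA, haB⟩ t
    rw [hβstar_eq] at hscaled
    exact OCBAConditions.eq_of_star_eq (fun i => (hμ i).ne') (fun i => (hσ i).ne') hβstar.le hβ
      (fun i => mul_pos (div_pos hβstar hαstar) (hα i)) ⟨hbA, hbB⟩ hscaled
  have ht : t = 1 := by
    rw [← hnormβ, ← hβstar_eq, hβ_eq, ← mul_sum, ← mul_add, hnormα, mul_one]
  refine ⟨?_, ?_⟩
  · rw [← hβstar_eq, ht, one_mul]
  · simp only [hβ_eq, ht, one_mul]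

/-- Uniqueness of the rate-optimal OCBA allocation for a single context with
Gaussian sampling: the balance condition (a), the pairwise-rate equality
condition (b), and the normalization to total mass `1` determine the
allocation fractions uniquely. -/
theorem ocba_allocation_unique {I : Type*} [Fintype I] [Nonempty I]
    (μstar : ℝ) (μ : I → ℝ) (σstar : ℝ) (σ : I → ℝ)
    (hμ : ∀ i, μstar < μ i) (hσstar : 0 < σstar) (hσ : ∀ i, 0 < σ i)
    (αstar : ℝ) (α : I → ℝ) (βstar : ℝ) (β : I → ℝ)
    (hαstar : 0 < αstar) (hα : ∀ i, 0 < α i)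
    (hβstar : 0 < βstar) (hβ : ∀ i, 0 < β i)
    (haA : αstar ^ 2 / σstar ^ 2 = ∑ i, (α i) ^ 2 / (σ i) ^ 2)
    (haB : ∀ i i', (μ i - μstar) ^ 2 / (σstar ^ 2 / αstar + (σ i) ^ 2 / α i)
      = (μ i' - μstar) ^ 2 / (σstar ^ 2 / αstar + (σ i') ^ 2 / α i'))
    (hbA : βstar ^ 2 / σstar ^ 2 = ∑ i, (β i) ^ 2 / (σ i) ^ 2)
    (hbB : ∀ i i', (μ i - μstar) ^ 2 / (σstar ^ 2 / βstar + (σ i) ^ 2 / β i)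
      = (μ i' - μstar) ^ 2 / (σstar ^ 2 / βstar + (σ i') ^ 2 / β i'))
    (hnormα : αstar + ∑ i, α i = 1)
    (hnormβ : βstar + ∑ i, β i = 1) :
    βstar = αstar ∧ β = α :=
  ocba_allocation_unique_general μstar μ σstar σ hμ hσ αstar α βstar β hαstar hα hβstar hβ haA haB
    hbA hbB hnormα hnormβ
end
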